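/- Assume in addition that b ∈ (0,1]. Then for every fixed k = 1, 2, ..., the quantity ρ_k(δ) := (leb(A_{(k+1)δ} \ A) − 2·leb(A_{kδ} \ A) + leb(A_{(k−1)δ} \ A)) / (bδ + 2·leb(A_δ \ A)) tends to 0 both as δ → 0+ and as δ → ∞. -/

import Mathlib

/-!
With `φ = d - b`, Fubini gives `leb (A_t \ A) = G t := ∫_{-t}^0 φ`, and the denominator of
`ρ_k(δ)` is at least `bδ`, so it suffices that the second difference
`G((k+1)δ) - 2 G(kδ) + G((k-1)δ)` is `o(δ)` at both ends. As `δ → 0+`, monotonicity of `φ` and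
its continuity at `0` give `G(cδ)/δ → c φ(0)` for every `c ≥ 0`, and the coefficients
`(k+1) - 2k + (k-1)` cancel. As `δ → ∞`, `G` stays bounded by `∫_{-∞}^0 φ`.
-/

open MeasureTheory Set Filter Topology

theorem volume_regionBetween_co_swap {f g : ℝ → ℝ} {s : Set ℝ} (hf : Measurable f)
    (hg : Measurable g) (hs : MeasurableSet s) :
    volume {p : ℝ × ℝ | p.2 ∈ s ∧ p.1 ∈ Ico (f p.2) (g p.2)} =
      ∫⁻ y in s, ENNReal.ofReal (g y - f y) := by
  have hm : MeasurableSet {p : ℝ × ℝ | p.2 ∈ s ∧ p.1 ∈ Ico (f p.2) (g p.2)} :=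
    (measurableSet_region_between_co hf hg hs).preimage measurable_swap
  rw [Measure.volume_eq_prod, Measure.prod_apply_symm hm, ← lintegral_indicator hs]
  congr with y
  by_cases hy : y ∈ s
  · simp [hy, Ico_def]
  · simp [hy]

section MonotoneIntegral

variable {φ : ℝ → ℝ} {a c : ℝ}

theorem MonotoneOn.mul_le_setIntegral_Ioc (hφ : MonotoneOn φ (Icc a c)) (hac : a ≤ c) :
    (c - a) * φ a ≤ ∫ u in Ioc a c, φ u := by
  have h := setIntegral_mono_on (integrableOn_const (μ := volume) measure_Ioc_lt_top.ne)
    ((hφ.integrableOn_isCompact isCompact_Icc).mono_set Ioc_subset_Icc_self) measurableSet_Ioc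
    fun u hu => hφ (left_mem_Icc.2 hac) (Ioc_subset_Icc_self hu) hu.1.le
  rwa [setIntegral_const, Real.volume_real_Ioc_of_le hac, smul_eq_mul] at h

theorem MonotoneOn.setIntegral_Ioc_le_mul (hφ : MonotoneOn φ (Icc a c)) (hac : a ≤ c) :
    ∫ u in Ioc a c, φ u ≤ (c - a) * φ c := by
  have h := setIntegral_mono_on
    ((hφ.integrableOn_isCompact isCompact_Icc).mono_set Ioc_subset_Icc_self)
    (integrableOn_const (μ := volume) measure_Ioc_lt_top.ne) measurableSet_Ioc
    fun u hu => hφ (Ioc_subset_Icc_self hu) (right_mem_Icc.2 hac) hu.2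
  rwa [setIntegral_const, Real.volume_real_Ioc_of_le hac, smul_eq_mul] at h

theorem MonotoneOn.tendsto_setIntegral_Ioc_neg_mul_div (hφ : MonotoneOn φ (Iic 0))
    (h0 : ContinuousWithinAt φ (Iic 0) 0) (hc : 0 ≤ c) :
    Tendsto (fun δ => (∫ u in Ioc (-(c * δ)) 0, φ u) / δ) (𝓝[>] 0) (𝓝 (c * φ 0)) := by
  have hlim : Tendsto (fun δ => -(c * δ)) (𝓝[>] 0) (𝓝[Iic 0] 0) := by
    refine tendsto_nhdsWithin_iff.2 ⟨?_, ?_⟩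
    · exact tendsto_nhdsWithin_of_tendsto_nhds
        ((continuous_const.mul continuous_id).neg.tendsto' 0 0 (by simp))
    · filter_upwards [self_mem_nhdsWithin] with δ (hδ : 0 < δ)
      simpa using mul_nonneg hc hδ.le
  refine tendsto_of_tendsto_of_tendsto_of_le_of_le' ((h0.tendsto.comp hlim).const_mul c)
    tendsto_const_nhds ?_ ?_
  all_goals
    filter_upwards [self_mem_nhdsWithin] with δ (hδ : 0 < δ)
    have hmono : MonotoneOn φ (Icc (-(c * δ)) 0) := hφ.mono Icc_subset_Iic_self
    have hcδ : -(c * δ) ≤ 0 := by simpa using mul_nonneg hc hδ.le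
  · rw [Function.comp_apply, le_div_iff₀ hδ]
    simpa [mul_right_comm] using hmono.mul_le_setIntegral_Ioc hcδ
  · rw [div_le_iff₀ hδ]
    simpa [mul_right_comm] using hmono.setIntegral_Ioc_le_mul hcδ

end MonotoneIntegral

def secondDiff (G : ℝ → ℝ) (k δ : ℝ) : ℝ :=
  G ((k + 1) * δ) - 2 * G (k * δ) + G ((k - 1) * δ)

section SecondDiff

variable {G : ℝ → ℝ} {k : ℝ}

theorem tendsto_secondDiff_div_nhdsGT {a : ℝ}
    (hG : ∀ c, 0 ≤ c → Tendsto (fun δ => G (c * δ) / δ) (𝓝[>] 0) (𝓝 (c * a))) (hk : 1 ≤ k) :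
    Tendsto (fun δ => secondDiff G k δ / δ) (𝓝[>] 0) (𝓝 0) := by
  have h := ((hG (k + 1) (by linarith)).sub ((hG k (by linarith)).const_mul 2)).add
    (hG (k - 1) (by linarith))
  convert h using 1
  · ext δ
    simp only [secondDiff]
    ring
  · congr 1
    ring

theorem tendsto_secondDiff_div_atTop {M : ℝ} (hG : ∀ t, 0 ≤ t → |G t| ≤ M) (hk : 1 ≤ k) :
    Tendsto (fun δ => secondDiff G k δ / δ) atTop (𝓝 0) := by
  have hbdd : ∀ᶠ δ in atTop, ‖secondDiff G k δ‖ ≤ 4 * M := by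
    filter_upwards [eventually_ge_atTop 0] with δ hδ
    have h1 := hG ((k + 1) * δ) (by nlinarith)
    have h2 := hG (k * δ) (by nlinarith)
    have h3 := hG ((k - 1) * δ) (by nlinarith)
    rw [Real.norm_eq_abs, secondDiff, abs_le]
    constructor <;> linarith [abs_le.1 h1, abs_le.1 h2, abs_le.1 h3]
  simpa [div_eq_inv_mul] using
    tendsto_inv_atTop_zero.zero_mul_isBoundedUnder_le (isBoundedUnder_of_eventually_le hbdd)

end SecondDiff

theorem tendsto_div_of_tendsto_div_of_le {α : Type*} {l : Filter α} {u v w : α → ℝ} {c : ℝ}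
    (hc : 0 < c) (hu : Tendsto (fun x => u x / w x) l (𝓝 0)) (hw : ∀ᶠ x in l, 0 < w x)
    (hv : ∀ᶠ x in l, c * w x ≤ v x) :
    Tendsto (fun x => u x / v x) l (𝓝 0) := by
  refine squeeze_zero_norm' ?_ (by simpa using (hu.norm.div_const c))
  filter_upwards [hw, hv] with x hwx hvx
  have hcw : 0 < c * w x := mul_pos hc hwx
  rw [Real.norm_eq_abs, abs_div, abs_of_pos (hcw.trans_le hvx), abs_of_pos hwx, div_div,
    mul_comm (w x)]
  exact div_le_div_of_nonneg_left (abs_nonneg _) hcw hvx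

theorem MeasureTheory.IntegrableOn.abs_setIntegral_Ioc_neg_le {φ : ℝ → ℝ}
    (hφ : IntegrableOn φ (Iic 0)) (t : ℝ) :
    |∫ u in Ioc (-t) 0, φ u| ≤ ∫ u in Iic 0, |φ u| :=
  abs_integral_le_integral_abs.trans <| setIntegral_mono_set hφ.abs
    (ae_of_all _ fun _ => abs_nonneg _) Ioc_subset_Iic_self.eventuallyLE

/-- The paper's `A_t`. -/
def trawlSet (b : ℝ) (d : ℝ → ℝ) (t : ℝ) : Set (ℝ × ℝ) :=
  {p | p.2 ≤ t ∧ b ≤ p.1 ∧ p.1 < d (p.2 - t)}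

section Trawl

variable {b t : ℝ} {d : ℝ → ℝ}

theorem trawlSet_diff_trawlSet_zero (hd : MonotoneOn d (Iic 0)) (ht : 0 ≤ t) :
    trawlSet b d t \ trawlSet b d 0 = {p | p.2 ∈ Ioc 0 t ∧ p.1 ∈ Ico b (d (p.2 - t))} := by
  ext ⟨x, s⟩
  simp only [trawlSet, Set.mem_sdiff, mem_ofPred_eq, mem_Ioc, mem_Ico, sub_zero, not_and, not_lt]
  constructor
  · rintro ⟨⟨hst, hbx, hxd⟩, hnot⟩
    refine ⟨⟨lt_of_not_ge fun hs0 => ?_, hst⟩, hbx, hxd⟩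
    have hds : d (s - t) ≤ d s := hd (mem_Iic.2 (by linarith)) hs0 (by linarith)
    exact (hxd.trans_le hds).not_ge (hnot hs0 hbx)
  · rintro ⟨⟨hs0, hst⟩, hbx, hxd⟩
    exact ⟨⟨hst, hbx, hxd⟩, fun hs => absurd hs (not_le.2 hs0)⟩

theorem toReal_volume_trawlSet_diff (hcont : ContinuousOn d (Iic 0))
    (hmono : MonotoneOn d (Iic 0)) (hb : ∀ s ≤ 0, b ≤ d s) (ht : 0 ≤ t) :
    (volume (trawlSet b d t \ trawlSet b d 0)).toReal = ∫ u in Ioc (-t) 0, (d u - b) := by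
  -- `d` is only controlled on `(-∞, 0]`; extended by `d 0` it is continuous, hence measurable.
  set e : ℝ → ℝ := fun u => d (min u 0)
  have he : Continuous e :=
    hcont.comp_continuous (continuous_id.min continuous_const) fun u => min_le_right u 0
  have hed : ∀ u ≤ 0, e u = d u := fun u hu => by simp only [e, min_eq_left hu]
  have heb : ∀ u, b ≤ e u := fun u => hb _ (min_le_right u 0)
  have hset :
      trawlSet b d t \ trawlSet b d 0 = {p | p.2 ∈ Ioc 0 t ∧ p.1 ∈ Ico b (e (p.2 - t))} := by
    rw [trawlSet_diff_trawlSet_zero hmono ht]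
    ext p
    exact and_congr_right fun hp => by rw [hed _ (sub_nonpos.2 hp.2)]
  have he_t : Continuous fun s => e (s - t) := he.comp (continuous_sub_right t)
  rw [hset, volume_regionBetween_co_swap measurable_const he_t.measurable measurableSet_Ioc,
    ← ofReal_integral_eq_lintegral_ofReal (f := fun s => e (s - t) - b)
      (he_t.sub continuous_const).integrableOn_Ioc (ae_of_all _ fun s => sub_nonneg.2 (heb _)),
    ENNReal.toReal_ofReal (setIntegral_nonneg measurableSet_Ioc fun s _ => sub_nonneg.2 (heb _)),
    ← intervalIntegral.integral_of_le ht,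
    intervalIntegral.integral_comp_sub_right (fun u => e u - b), zero_sub, sub_self,
    intervalIntegral.integral_of_le (neg_nonpos.2 ht)]
  exact setIntegral_congr_fun measurableSet_Ioc fun u hu => by rw [hed u hu.2]

end Trawl

theorem autocorrelation_limits_general
    (b : ℝ) (hb' : 0 < b)
    (d : ℝ → ℝ)
    (hd_cont : ContinuousOn d (Set.Iic 0))
    (hd_mono : MonotoneOn d (Set.Iic 0))
    (hd_range : ∀ s ≤ (0:ℝ), d s ∈ Set.Icc b 1)
    (hd_int : MeasureTheory.IntegrableOn (fun s => d s - b) (Set.Iic 0))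
    (A : ℝ → Set (ℝ × ℝ))
    (hA : ∀ t, A t = {p : ℝ × ℝ | p.2 ≤ t ∧ b ≤ p.1 ∧ p.1 < d (p.2 - t)})
    (F : ℝ → ℝ)
    (hF : ∀ t, F t = (volume (A t \ A 0)).toReal)
    (ρ : ℕ → ℝ → ℝ)
    (hρ : ∀ k : ℕ, ∀ δ : ℝ,
      ρ k δ = (F (((k:ℝ)+1)*δ) - 2 * F ((k:ℝ)*δ) + F (((k:ℝ)-1)*δ)) / (b * δ + 2 * F δ)) :
    ∀ k : ℕ, 1 ≤ k →
      Filter.Tendsto (ρ k) (nhdsWithin 0 (Set.Ioi 0)) (nhds 0) ∧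
      Filter.Tendsto (ρ k) Filter.atTop (nhds 0) := by
  intro k hk
  have hk' : (1 : ℝ) ≤ k := by exact_mod_cast hk
  obtain rfl : A = trawlSet b d := funext hA
  set G : ℝ → ℝ := fun t => ∫ u in Ioc (-t) 0, (d u - b)
  have hFG : ∀ t, 0 ≤ t → F t = G t := fun t ht =>
    (hF t).trans (toReal_volume_trawlSet_diff hd_cont hd_mono (fun s hs => (hd_range s hs).1) ht)
  have hρG : ∀ δ, 0 < δ → ρ k δ = secondDiff G k δ / (b * δ + 2 * F δ) := fun δ hδ => by
    rw [hρ, secondDiff, hFG _ (by positivity), hFG _ (by positivity), hFG _ (by nlinarith)]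
  have hlim : ∀ l : Filter ℝ, (∀ᶠ δ in l, 0 < δ) →
      Tendsto (fun δ => secondDiff G k δ / δ) l (𝓝 0) → Tendsto (ρ k) l (𝓝 0) := by
    intro l hl hG
    have hden : ∀ δ, b * δ ≤ b * δ + 2 * F δ := fun δ =>
      le_add_of_nonneg_right (mul_nonneg zero_le_two (hF δ ▸ ENNReal.toReal_nonneg))
    refine (tendsto_div_of_tendsto_div_of_le hb' hG hl (Eventually.of_forall hden)).congr' ?_
    filter_upwards [hl] with δ hδ using (hρG δ hδ).symm
  have hmono : MonotoneOn (fun u => d u - b) (Iic 0) := fun u hu v hv huv =>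
    sub_le_sub_right (hd_mono hu hv huv) b
  have hcont : ContinuousWithinAt (fun u => d u - b) (Iic 0) 0 :=
    (hd_cont 0 (mem_Iic.2 le_rfl)).sub continuousWithinAt_const
  exact ⟨hlim _ self_mem_nhdsWithin (tendsto_secondDiff_div_nhdsGT
      (fun c hc => hmono.tendsto_setIntegral_Ioc_neg_mul_div hcont hc) hk'),
    hlim _ (eventually_gt_atTop 0)
      (tendsto_secondDiff_div_atTop (fun t _ => hd_int.abs_setIntegral_Ioc_neg_le t) hk')⟩

/-- Assume `b ∈ (0,1]`.  For every fixed `k = 1, 2, ...`, the lag-`k`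
autocorrelation
`ρ_k(δ) = (leb(A_{(k+1)δ} \ A) − 2 leb(A_{kδ} \ A) + leb(A_{(k−1)δ} \ A)) / (bδ + 2 leb(A_δ \ A))`
tends to `0` both as `δ → 0+` and as `δ → ∞`. -/
theorem autocorrelation_limits
    (b : ℝ) (hb : b ∈ Set.Icc (0:ℝ) 1) (hb' : 0 < b)
    (d : ℝ → ℝ)
    (hd_cont : ContinuousOn d (Set.Iic 0))
    (hd_mono : MonotoneOn d (Set.Iic 0))
    (hd_range : ∀ s ≤ (0:ℝ), d s ∈ Set.Icc b 1)
    (hd0 : d 0 = 1)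
    (hd_lim : Filter.Tendsto d Filter.atBot (nhds b))
    (hd_int : MeasureTheory.IntegrableOn (fun s => d s - b) (Set.Iic 0))
    (A : ℝ → Set (ℝ × ℝ))
    (hA : ∀ t, A t = {p : ℝ × ℝ | p.2 ≤ t ∧ b ≤ p.1 ∧ p.1 < d (p.2 - t)})
    (F : ℝ → ℝ)
    (hF : ∀ t, F t = (volume (A t \ A 0)).toReal)
    (ρ : ℕ → ℝ → ℝ)
    (hρ : ∀ k : ℕ, ∀ δ : ℝ,
      ρ k δ = (F (((k:ℝ)+1)*δ) - 2 * F ((k:ℝ)*δ) + F (((k:ℝ)-1)*δ)) / (b * δ + 2 * F δ)) :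
    ∀ k : ℕ, 1 ≤ k →
      Filter.Tendsto (ρ k) (nhdsWithin 0 (Set.Ioi 0)) (nhds 0) ∧
      Filter.Tendsto (ρ k) Filter.atTop (nhds 0) :=
  autocorrelation_limits_general b hb' d hd_cont hd_mono hd_range hd_int A hA F hF ρ hρ
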